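/- Let A be a finite abelian group, G a finite group, α : G → Aut(A) an action, and K = A ⋊_α G. Then the pair (K, G) is admissible in the sense of Definition 3.3; i.e., both of the following hold: (1) for every class function f : K → ℂ and every class function h : G → ℂ, Ind_G^K((Res_G^K f)·h) = f · (Ind_G^K h); and (2) for every class function h : G → ℂ, Res_G^K(Ind_G^K h) = h · Res_G^K(Ind_G^K 1), where 1 is the constant function 1 on G and products are pointwise. (This is the group case of Theorem 4.7; the regularity condition of Definition 4.4 holds automatically since A is an abelian group.) -/
import Mathlib


namespace Stmt17

open scoped Classical in
/-- The function induced from a subgroup `H` of a finite group `K`: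
`(Ind_H^K f)(k) = (1/|H|) · Σ_{t ∈ K, t k t⁻¹ ∈ H} f (t k t⁻¹)`. -/
noncomputable def ind {K : Type*} [Group K] [Fintype K] (H : Subgroup K) (f : K → ℂ) :
    K → ℂ :=
  fun k => (1 / (Nat.card H : ℂ)) * ∑ t : K, if t * k * t⁻¹ ∈ H then f (t * k * t⁻¹) else 0

instance {A G : Type*} [Group A] [Fintype A] [Group G] [Fintype G] {α : G →* MulAut A} :
    Fintype (A ⋊[α] G) :=
  Fintype.ofEquiv (A × G)
    { toFun := fun p => ⟨p.1, p.2⟩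
      invFun := fun x => (x.left, x.right)
      left_inv := fun _ => rfl
      right_inv := fun _ => rfl }

/-- Theorem 4.7, group case: the pair `(K, G)` with `K = A ⋊[α] G` is admissible:
(1) `Ind_G^K ((Res_G^K f)·h) = f · Ind_G^K h` for all class functions `f` on `K` and
`h` on `G`; (2) `Res_G^K (Ind_G^K h) = h · Res_G^K (Ind_G^K 1)` for all class
functions `h` on `G`. -/
theorem admissible_pair {A G : Type*} [CommGroup A] [Fintype A] [Group G] [Fintype G]
    (α : G →* MulAut A) :
    (∀ f : A ⋊[α] G → ℂ, (∀ s t : A ⋊[α] G, f (s * t * s⁻¹) = f t) →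
      ∀ h : G → ℂ, (∀ s t : G, h (s * t * s⁻¹) = h t) →
        ind (SemidirectProduct.inr : G →* A ⋊[α] G).range (fun x => f x * h x.right)
          = fun k => f k *
              ind (SemidirectProduct.inr : G →* A ⋊[α] G).range (fun x => h x.right) k) ∧
    (∀ h : G → ℂ, (∀ s t : G, h (s * t * s⁻¹) = h t) →
      ∀ g : G,
        ind (SemidirectProduct.inr : G →* A ⋊[α] G).range (fun x => h x.right) ⟨1, g⟩
          = h g *
              ind (SemidirectProduct.inr : G →* A ⋊[α] G).range (fun _ => (1 : ℂ)) ⟨1, g⟩) := by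
  classical
  constructor
  · intro f hf h hh
    funext k
    simp only [ind]
    rw [show (∑ t : A ⋊[α] G, if t * k * t⁻¹ ∈ (SemidirectProduct.inr : G →* A ⋊[α] G).range
          then f (t * k * t⁻¹) * h ((t * k * t⁻¹).right) else 0)
        = f k * ∑ t : A ⋊[α] G,
            if t * k * t⁻¹ ∈ (SemidirectProduct.inr : G →* A ⋊[α] G).range
            then h ((t * k * t⁻¹).right) else 0 from by
      rw [Finset.mul_sum]
      exact Finset.sum_congr rfl fun t _ => by rw [hf t k, mul_ite, mul_zero]]
    ring
  · intro h hh g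
    simp only [ind]
    rw [show (∑ t : A ⋊[α] G,
          if t * (⟨1, g⟩ : A ⋊[α] G) * t⁻¹ ∈ (SemidirectProduct.inr : G →* A ⋊[α] G).range
          then h ((t * (⟨1, g⟩ : A ⋊[α] G) * t⁻¹).right) else 0)
        = h g * ∑ t : A ⋊[α] G,
            if t * (⟨1, g⟩ : A ⋊[α] G) * t⁻¹ ∈ (SemidirectProduct.inr : G →* A ⋊[α] G).range
            then (1 : ℂ) else 0 from by
      rw [Finset.mul_sum]
      refine Finset.sum_congr rfl fun t _ => ?_
      rw [mul_ite, mul_one, mul_zero]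
      congr 1
      rw [show ((t * (⟨1, g⟩ : A ⋊[α] G) * t⁻¹).right) = t.right * g * t.right⁻¹ by simp,
        hh t.right g]]
    ring

end Stmt17
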